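/- Let F₀ be a real number with 1/2 < F₀ < 1/√2, let 0 < ε < 1/2, and define the purification fidelity sequence by F_n = F_{n-1}² / (F_{n-1}² + (1 - F_{n-1})²) for n ≥ 1. Then there exists a natural number m with m ≤ ⌈(-log₂(F₀·√2)) / log₂(F₀ + 1/2)⌉ + ⌈log₂(log₂(1/ε))⌉ such that F_m ≥ 1 - ε. -/

import Mathlib

/-!
The odds `F / (1 - F)` are squared by each purification step. While `F ≤ 1/√2` one step gives
`g(F) ≥ F (F + 1/2) ≥ F (F₀ + 1/2)`, so the fidelity grows at least geometrically and passes
`1/√2` within the first ceiling. From then on the odds are at least `2`, so after `N` further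
steps they are at least `2 ^ 2 ^ N ≥ 1/ε`, which forces `F ≥ 1 - ε`.
-/

open Real Set

namespace Purification

noncomputable def purify (x : ℝ) : ℝ := x ^ 2 / (x ^ 2 + (1 - x) ^ 2)

noncomputable def odds (x : ℝ) : ℝ := x / (1 - x)

lemma purify_denom_pos (x : ℝ) : 0 < x ^ 2 + (1 - x) ^ 2 := by
  nlinarith [sq_nonneg (2 * x - 1)]

lemma one_sub_purify (x : ℝ) : 1 - purify x = (1 - x) ^ 2 / (x ^ 2 + (1 - x) ^ 2) := by
  have := (purify_denom_pos x).ne'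
  rw [purify]
  field_simp
  ring

-- Holds also at `x = 1`, where both sides are `0` by the convention `a / 0 = 0`.
lemma odds_purify (x : ℝ) : odds (purify x) = odds x ^ 2 := by
  rw [odds, one_sub_purify, purify, div_div_div_cancel_right₀ (purify_denom_pos x).ne', odds,
    div_pow]

lemma odds_iterate_purify (x : ℝ) (n : ℕ) : odds (purify^[n] x) = odds x ^ 2 ^ n := by
  induction n with
  | zero => simp
  | succ n ih => rw [Function.iterate_succ_apply', odds_purify, ih, ← pow_mul, ← pow_succ]

lemma mapsTo_purify_Ioo : MapsTo purify (Ioo (1 / 2) 1) (Ioo (1 / 2) 1) := by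
  rintro x ⟨hx₀, hx₁⟩
  have hD := purify_denom_pos x
  constructor
  · rw [purify, lt_div_iff₀ hD]
    nlinarith
  · rw [purify, div_lt_one hD]
    nlinarith

lemma sq_le_half_of_le_inv_sqrt_two {x : ℝ} (hx₀ : 0 ≤ x) (hx : x ≤ 1 / √2) : x ^ 2 ≤ 1 / 2 := by
  calc x ^ 2 ≤ (1 / √2) ^ 2 := pow_le_pow_left₀ hx₀ hx 2
    _ = 1 / 2 := by rw [div_pow, sq_sqrt zero_le_two, one_pow]

lemma two_thirds_le_inv_sqrt_two : (2 / 3 : ℝ) ≤ 1 / √2 := by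
  rw [le_div_iff₀ (sqrt_pos.2 two_pos)]
  nlinarith [sq_sqrt (zero_le_two : (0 : ℝ) ≤ 2), sqrt_nonneg 2]

lemma inv_sqrt_two_lt_one : 1 / √2 < 1 := by
  rw [div_lt_one (sqrt_pos.2 two_pos), lt_sqrt zero_le_one]
  norm_num

-- `g(x) - x (x + 1/2)` has the sign of `-(2x - 1)(x² - 1/2)`.
lemma mul_add_half_le_purify {x : ℝ} (hx : 1 / 2 ≤ x) (hx' : x ≤ 1 / √2) :
    x * (x + 1 / 2) ≤ purify x := by
  have hsq := sq_le_half_of_le_inv_sqrt_two (by linarith) hx'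
  have hD := purify_denom_pos x
  rw [purify, le_div_iff₀ hD]
  nlinarith [mul_nonpos_of_nonneg_of_nonpos (by linarith : 0 ≤ x)
    (mul_nonpos_of_nonneg_of_nonpos (by linarith : 0 ≤ 2 * x - 1) (by linarith : x ^ 2 - 1 / 2 ≤ 0))]

lemma mul_pow_le_iterate_purify {x : ℝ} (hx : 1 / 2 < x) {k : ℕ}
    (hk : ∀ j < k, purify^[j] x ≤ 1 / √2) : x * (x + 1 / 2) ^ k ≤ purify^[k] x := by
  induction k with
  | zero => simp
  | succ k ih =>
    have hy := ih fun j hj ↦ hk j (Nat.lt_succ_of_lt hj)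
    have hxy : x ≤ purify^[k] x :=
      le_trans (le_mul_of_one_le_right (by linarith) (one_le_pow₀ (by linarith))) hy
    rw [Function.iterate_succ_apply', pow_succ, ← mul_assoc]
    calc x * (x + 1 / 2) ^ k * (x + 1 / 2)
        ≤ purify^[k] x * (purify^[k] x + 1 / 2) := by gcongr; linarith
      _ ≤ purify (purify^[k] x) := mul_add_half_le_purify (by linarith) (hk k k.lt_succ_self)

lemma one_le_mul_pow_of_div_le {a c b : ℝ} {N : ℕ} (hb : 1 < b) (ha : 0 < a) (hc : 1 < c)
    (hN : -logb b a / logb b c ≤ N) : 1 ≤ a * c ^ N := by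
  have hlogc : 0 < logb b c := logb_pos hb hc
  rw [← logb_nonneg_iff hb (by positivity), logb_mul ha.ne' (by positivity), logb_pow]
  rw [div_le_iff₀ hlogc] at hN
  linarith

lemma exists_le_ceil_inv_sqrt_two_le_iterate_purify {x : ℝ} (hx : 1 / 2 < x) :
    ∃ n ≤ ⌈-logb 2 (x * √2) / logb 2 (x + 1 / 2)⌉₊, 1 / √2 ≤ purify^[n] x := by
  set N := ⌈-logb 2 (x * √2) / logb 2 (x + 1 / 2)⌉₊
  by_contra! hlt
  have hgrowth := mul_pow_le_iterate_purify hx fun j hj ↦ (hlt j hj.le).le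
  have hreach : 1 ≤ x * √2 * (x + 1 / 2) ^ N :=
    one_le_mul_pow_of_div_le one_lt_two (by positivity) (by linarith) (Nat.le_ceil _)
  have hs : 0 < √2 := sqrt_pos.2 two_pos
  have : 1 / √2 ≤ x * (x + 1 / 2) ^ N := by
    rw [div_le_iff₀ hs]
    linarith
  linarith [hlt N le_rfl]

lemma le_two_pow_two_pow_ceil_logb_logb {x : ℝ} (hx : 1 < x) :
    x ≤ 2 ^ 2 ^ ⌈logb 2 (logb 2 x)⌉₊ := by
  set N := ⌈logb 2 (logb 2 x)⌉₊
  have hlog : 0 < logb 2 x := logb_pos one_lt_two hx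
  have h : logb 2 x ≤ 2 ^ N := by
    rw [← rpow_natCast, ← logb_le_iff_le_rpow one_lt_two hlog]
    exact Nat.le_ceil _
  calc x ≤ (2 : ℝ) ^ ((2 ^ N : ℕ) : ℝ) := by
        rw [← logb_le_iff_le_rpow one_lt_two (by linarith)]
        exact_mod_cast h
    _ = 2 ^ 2 ^ N := rpow_natCast 2 _

lemma one_sub_le_of_inv_le_odds {ε y : ℝ} (hε : 0 < ε) (hy : y < 1) (h : 1 / ε ≤ odds y) :
    1 - ε ≤ y := by
  rw [odds, div_le_div_iff₀ hε (by linarith)] at h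
  nlinarith

lemma one_sub_le_iterate_purify {ε y : ℝ} (hε₀ : 0 < ε) (hε₁ : ε < 1) (hy : 2 / 3 ≤ y)
    (hy₁ : y < 1) : 1 - ε ≤ purify^[⌈logb 2 (logb 2 (1 / ε))⌉₊] y := by
  set N := ⌈logb 2 (logb 2 (1 / ε))⌉₊
  have hodds : 2 ≤ odds y := by
    rw [odds, le_div_iff₀ (by linarith)]
    linarith
  refine one_sub_le_of_inv_le_odds hε₀ ((mapsTo_purify_Ioo.iterate N ⟨by linarith, hy₁⟩).2) ?_
  calc 1 / ε ≤ 2 ^ 2 ^ N := le_two_pow_two_pow_ceil_logb_logb (by rw [lt_div_iff₀ hε₀]; linarith)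
    _ ≤ odds y ^ 2 ^ N := pow_le_pow_left₀ zero_le_two hodds _
    _ = odds (purify^[N] y) := (odds_iterate_purify y N).symm

end Purification

open Purification

/-- Starting from `1/2 < F 0 < 1/√2`, at most
`⌈(-log₂(F₀·√2)) / log₂(F₀ + 1/2)⌉ + ⌈log₂ log₂ (1/ε)⌉` purification
repetitions suffice to reach fidelity at least `1 - ε`. -/
theorem purification_total_repetitions (F : ℕ → ℝ) (ε : ℝ)
    (h0 : 1 / 2 < F 0) (h1 : F 0 < 1 / Real.sqrt 2)
    (hε0 : 0 < ε) (hε1 : ε < 1 / 2)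
    (hrec : ∀ n : ℕ, F (n + 1) = (F n) ^ 2 / ((F n) ^ 2 + (1 - F n) ^ 2)) :
    ∃ m : ℕ,
      m ≤ ⌈(-Real.logb 2 (F 0 * Real.sqrt 2)) / Real.logb 2 (F 0 + 1 / 2)⌉₊ +
            ⌈Real.logb 2 (Real.logb 2 (1 / ε))⌉₊ ∧
      F m ≥ 1 - ε := by
  have hF : ∀ n, F n = purify^[n] (F 0) := by
    intro n
    induction n with
    | zero => rfl
    | succ n ih => rw [hrec, ih, Function.iterate_succ_apply', purify]
  obtain ⟨n, hn, hn_ge⟩ := exists_le_ceil_inv_sqrt_two_le_iterate_purify h0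
  have hF0 : F 0 ∈ Ioo (1 / 2) 1 := ⟨h0, h1.trans inv_sqrt_two_lt_one⟩
  refine ⟨⌈Real.logb 2 (Real.logb 2 (1 / ε))⌉₊ + n, by omega, ?_⟩
  rw [hF, Function.iterate_add_apply]
  exact one_sub_le_iterate_purify hε0 (by linarith) (two_thirds_le_inv_sqrt_two.trans hn_ge)
    (mapsTo_purify_Ioo.iterate n hF0).2
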